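/- Let n ≥ 2 and for i = 1,…,n define the contracting similarities ψᵢ: ℝ³ → ℝ³ by ψᵢ(x,y,z) = ((x + 2i − 2)/(2n−1), y/(2n−1), z/(2n−1)). Let B' be the open Euclidean ball in ℝ³ with center (1/2, 0, 0) and radius 5/6. Then the closed balls ψ₁(B̄'),…,ψₙ(B̄') are pairwise disjoint and all contained in B', and the attractor 𝒞ₙ of {ψ₁,…,ψₙ} satisfies 𝒞ₙ ⊂ B'. -/

import Mathlib

open Metric Set

/-- The contracting similarities `ψᵢ(x,y,z) = ((x + 2i - 2)/(2n-1), y/(2n-1), z/(2n-1))`,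
`i = 1, …, n` (indexed here by `i : Fin n`, so `i = 0, …, n-1` gives the shift `2i`). -/
noncomputable def psi (n : ℕ) (i : Fin n) (x : EuclideanSpace ℝ (Fin 3)) :
    EuclideanSpace ℝ (Fin 3) :=
  (2 * (n : ℝ) - 1)⁻¹ • (x + EuclideanSpace.single (0 : Fin 3) (2 * (i : ℕ) : ℝ))

/-- The open ball `B'` in `ℝ³` with center `(1/2, 0, 0)` and radius `5/6`. -/
noncomputable def ballB' : Set (EuclideanSpace ℝ (Fin 3)) :=
  Metric.ball (EuclideanSpace.single (0 : Fin 3) (1 / 2 : ℝ)) (5 / 6)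

/-!
Every ψᵢ is a similarity of ratio `r = 1/(2n-1) < 1`, and ψᵢ moves the centre `c = (1/2, 0, 0)`
of `B'` by at most `(1 - r)/2 < (1 - r) · 5/6`. Hence `ψᵢ(B̄')`, a closed ball of radius `5r/6`,
lies in `B'`; distinct ψᵢ send `c` to points at distance `≥ 2r > 2 · 5r/6`, which separates the
balls. For a compact set `S ⊆ ⋃ ψᵢ(S)`, a point `ψᵢ(y)` of `S` farthest from `c`, at distance `M`,
satisfies `M ≤ r M + dist (ψᵢ c) c < r M + (1 - r) · 5/6`, so `M < 5/6`.
-/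

open scoped NNReal

section LipschitzIFS

variable {X ι : Type*} [PseudoMetricSpace X] {K : ℝ≥0} {c : X} {ρ : ℝ}

theorem LipschitzWith.image_closedBall_subset_ball {g : X → X} (hg : LipschitzWith K g)
    (hc : dist (g c) c < (1 - K) * ρ) : g '' closedBall c ρ ⊆ ball c ρ :=
  (hg.mapsTo_closedBall c ρ).image_subset.trans (closedBall_subset_ball' (by linarith))

theorem LipschitzWith.disjoint_image_closedBall {g h : X → X} (hg : LipschitzWith K g)
    (hh : LipschitzWith K h) (hgh : 2 * (K * ρ) < dist (g c) (h c)) :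
    Disjoint (g '' closedBall c ρ) (h '' closedBall c ρ) :=
  ((closedBall_disjoint_closedBall (by linarith)).mono (hg.mapsTo_closedBall c ρ).image_subset
    (hh.mapsTo_closedBall c ρ).image_subset)

theorem IsCompact.subset_ball_of_subset_iUnion_image {f : ι → X → X} {S : Set X}
    (hS : IsCompact S) (hSf : S ⊆ ⋃ i, f i '' S) (hf : ∀ i, LipschitzWith K (f i))
    (hK : K < 1) (hc : ∀ i, dist (f i c) c < (1 - K) * ρ) : S ⊆ ball c ρ := by
  intro x hx
  obtain ⟨x₀, hx₀, hmax⟩ :=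
    hS.exists_isMaxOn ⟨x, hx⟩ (continuous_id.dist continuous_const).continuousOn
  obtain ⟨i, y, hy, rfl⟩ := mem_iUnion.mp (hSf hx₀)
  have hy_le : dist y c ≤ dist (f i y) c := hmax hy
  have hK_real : (K : ℝ) < 1 := hK
  have hfar : dist (f i y) c < K * dist (f i y) c + (1 - K) * ρ :=
    calc dist (f i y) c ≤ dist (f i y) (f i c) + dist (f i c) c := dist_triangle _ _ _
      _ < K * dist y c + (1 - K) * ρ := add_lt_add_of_le_of_lt ((hf i).dist_le_mul y c) (hc i)
      _ ≤ K * dist (f i y) c + (1 - K) * ρ := by gcongr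
  have hlt : dist (f i y) c < ρ := by nlinarith
  exact mem_ball.mpr ((hmax hx).trans_lt hlt)

end LipschitzIFS

theorem lipschitzWith_psi (n : ℕ) (i : Fin n) :
    LipschitzWith ‖(2 * (n : ℝ) - 1)⁻¹‖₊ (psi n i) := by
  have h := (lipschitzWith_smul (2 * (n : ℝ) - 1)⁻¹).comp (isometry_add_right
    (EuclideanSpace.single (0 : Fin 3) (2 * (i : ℕ) : ℝ))).lipschitz
  rwa [mul_one] at h

theorem psi_single_zero (n : ℕ) (i : Fin n) (a : ℝ) :
    psi n i (EuclideanSpace.single 0 a)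
      = EuclideanSpace.single 0 ((2 * (n : ℝ) - 1)⁻¹ * (a + 2 * (i : ℕ))) := by
  ext j
  by_cases h : j = 0 <;> simp [psi, h, mul_add]

theorem dist_psi_psi (n : ℕ) (i j : Fin n) (x : EuclideanSpace ℝ (Fin 3)) :
    dist (psi n i x) (psi n j x)
      = |(2 * (n : ℝ) - 1)⁻¹| * (2 * |((i : ℕ) : ℝ) - (j : ℕ)|) := by
  rw [psi, psi, dist_smul₀, dist_add_left, PiLp.dist_single_same, Real.dist_eq, Real.norm_eq_abs,
    ← mul_sub, abs_mul, abs_two]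

theorem dist_psi_single_half_le (n : ℕ) (i : Fin n) :
    dist (psi n i (EuclideanSpace.single 0 (1 / 2))) (EuclideanSpace.single 0 (1 / 2))
      ≤ (1 - (2 * (n : ℝ) - 1)⁻¹) / 2 := by
  rw [psi_single_zero, PiLp.dist_single_same, Real.dist_eq, abs_le]
  have hi : ((i : ℕ) : ℝ) + 1 ≤ n := by exact_mod_cast i.isLt
  have hi₀ : (0 : ℝ) ≤ (i : ℕ) := Nat.cast_nonneg _
  set r := (2 * (n : ℝ) - 1)⁻¹
  have hr : 0 ≤ r := inv_nonneg.mpr (by linarith)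
  have hrm : r * (2 * n - 1) = 1 := inv_mul_cancel₀ (by linarith)
  have hshift : r * (2 * (i : ℕ) + 1) ≤ r * (2 * n - 1) := by gcongr; linarith
  constructor <;> nlinarith [mul_nonneg hr hi₀]

theorem psi_balls_disjoint_and_attractor_subset_general
    (n : ℕ) (hn : 2 ≤ n)
    (Cn : Set (EuclideanSpace ℝ (Fin 3))) (hCcomp : IsCompact Cn)
    (hCinv : Cn = ⋃ i, psi n i '' Cn) :
    (∀ i j : Fin n, i ≠ j →
      Disjoint (psi n i '' closure ballB') (psi n j '' closure ballB')) ∧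
    (∀ i : Fin n, psi n i '' closure ballB' ⊆ ballB') ∧
    Cn ⊆ ballB' := by
  set c := EuclideanSpace.single (0 : Fin 3) (1 / 2 : ℝ)
  set r := (2 * (n : ℝ) - 1)⁻¹
  have hm : (1 : ℝ) < 2 * n - 1 := by
    have : (2 : ℝ) ≤ n := by exact_mod_cast hn
    linarith
  have hr₀ : 0 < r := inv_pos.mpr (by linarith)
  have hr₁ : r < 1 := inv_lt_one_of_one_lt₀ hm
  have hK : (‖r‖₊ : ℝ) = r := by rw [coe_nnnorm, Real.norm_of_nonneg hr₀.le]
  have hclosure : closure ballB' = closedBall c (5 / 6) := closure_ball c (by norm_num)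
  have hcenter (i : Fin n) : dist (psi n i c) c < (1 - ‖r‖₊) * (5 / 6) := by
    rw [hK]; linarith [dist_psi_single_half_le n i]
  refine ⟨fun i j hij => ?_, fun i => ?_, ?_⟩
  · have hij' : (1 : ℝ) ≤ |((i : ℕ) : ℝ) - (j : ℕ)| := by
      have hne : ((i : ℕ) : ℤ) ≠ (j : ℕ) := Int.ofNat_inj.not.mpr (Fin.val_ne_of_ne hij)
      exact_mod_cast Int.one_le_abs (sub_ne_zero.mpr hne)
    rw [hclosure]
    refine (lipschitzWith_psi n i).disjoint_image_closedBall (lipschitzWith_psi n j) ?_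
    rw [dist_psi_psi, hK, abs_of_pos hr₀]
    nlinarith
  · rw [hclosure]
    exact (lipschitzWith_psi n i).image_closedBall_subset_ball (hcenter i)
  · exact hCcomp.subset_ball_of_subset_iUnion_image hCinv.le (lipschitzWith_psi n)
      (by rw [← NNReal.coe_lt_coe, hK]; exact hr₁) hcenter

/-- For `n ≥ 2`, the closed balls `ψ₁(B̄'), …, ψₙ(B̄')` are pairwise disjoint and contained
in `B'`, and the attractor `𝒞ₙ` of `{ψ₁, …, ψₙ}` satisfies `𝒞ₙ ⊂ B'`. -/
theorem psi_balls_disjoint_and_attractor_subset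
    (n : ℕ) (hn : 2 ≤ n)
    (Cn : Set (EuclideanSpace ℝ (Fin 3))) (hCne : Cn.Nonempty) (hCcomp : IsCompact Cn)
    (hCinv : Cn = ⋃ i, psi n i '' Cn) :
    (∀ i j : Fin n, i ≠ j →
      Disjoint (psi n i '' closure ballB') (psi n j '' closure ballB')) ∧
    (∀ i : Fin n, psi n i '' closure ballB' ⊆ ballB') ∧
    Cn ⊆ ballB' :=
  psi_balls_disjoint_and_attractor_subset_general n hn Cn hCcomp hCinv
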